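/- arXiv:2208.13907 — 8 statements merged into one kernel-verified Lean document; each statement's English description precedes it below -/
import Mathlib

section
/- If S ⊆ V is a valid instrumentation set of a control-flow graph G, then every ambiguous vertex u of G belongs to S. (Equivalently: for any ambiguous vertex u there exist two coverage profiles C, C' ∈ 𝒞 that agree on all vertices except u.) -/
/-! Pick an in-neighbour `x` and an out-neighbour `y` of `u` in `A u ∩ B u`, and `u`-avoiding
walks `s ⇝ x ⇝ t` and `s ⇝ y ⇝ t`. Adding the walk `s ⇝ x → u → y ⇝ t` to the trace formed by
these two walks enlarges its coverage profile by `u` alone, so the two profiles can only be told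
apart by instrumenting `u`. -/

/-- A control-flow graph (CFG): a directed graph with a distinguished entry
vertex `s` (no incoming edges) and terminal vertex `t` (no outgoing edges),
`s ≠ t`, such that every vertex is reachable from `s` and every vertex can
reach `t` by a directed path. -/
structure CFG (V : Type*) where
  E : V → V → Prop
  s : V
  t : V
  s_ne_t : s ≠ t
  no_in_s : ∀ v, ¬ E v s
  no_out_t : ∀ v, ¬ E t v
  reach_from_s : ∀ v, Relation.ReflTransGen E s v
  reach_to_t : ∀ v, Relation.ReflTransGen E v t

/-- The (vertex) coverage profile of a trace `T` (a finite collection of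
walks, each walk given as a list of vertices): the set of vertices visited
by at least one walk of the trace. -/
def cover {V : Type*} (T : List (List V)) : Set V := {v | ∃ w ∈ T, v ∈ w}

/-- The edge coverage profile of a trace `T`: the set of (directed) edges
traversed by at least one walk of the trace. -/
def edgeCover {V : Type*} (T : List (List V)) : Set (V × V) :=
  {p | ∃ w ∈ T, p ∈ w.zip w.tail}

namespace CFG

variable {V : Type*} (G : CFG V)

/-- `A u`: the set of vertices reachable from `s` by a directed path avoiding `u`. -/
def A (u : V) : Set V :=
  {v | v ≠ u ∧ Relation.ReflTransGen (fun x y => G.E x y ∧ x ≠ u ∧ y ≠ u) G.s v}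

/-- `B u`: the set of vertices from which `t` is reachable by a directed path avoiding `u`. -/
def B (u : V) : Set V :=
  {v | v ≠ u ∧ Relation.ReflTransGen (fun x y => G.E x y ∧ x ≠ u ∧ y ≠ u) v G.t}

/-- Out-neighbors of `u`. -/
def Nout (u : V) : Set V := {v | G.E u v}

/-- In-neighbors of `u`. -/
def Nin (u : V) : Set V := {v | G.E v u}

/-- An `s`-`t` walk: a nonempty list starting at `s`, ending at `t`, whose
consecutive vertices are joined by edges. -/
def IsWalk (w : List V) : Prop :=
  w.head? = some G.s ∧ w.getLast? = some G.t ∧ w.Chain' G.E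

/-- An execution trace: a finite collection of `s`-`t` walks. -/
def IsTrace (T : List (List V)) : Prop := ∀ w ∈ T, G.IsWalk w

/-- `𝒞`: the family of all coverage profiles of execution traces. -/
def Profiles : Set (Set V) := {C | ∃ T, G.IsTrace T ∧ C = cover T}

/-- `S` is a valid instrumentation set if any two coverage profiles agreeing
on `S` are equal. -/
def ValidInstr (S : Set V) : Prop :=
  ∀ C ∈ G.Profiles, ∀ C' ∈ G.Profiles, C ∩ S = C' ∩ S → C = C'

/-- A vertex `u` is ambiguous if some in-neighbor of `u` lies in `A u ∩ B u`
and some out-neighbor of `u` lies in `A u ∩ B u`. -/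
def Ambiguous (u : V) : Prop :=
  (∃ x ∈ G.Nin u, x ∈ G.A u ∩ G.B u) ∧ (∃ y ∈ G.Nout u, y ∈ G.A u ∩ G.B u)

/-- `u` is forward inferable if `Nout u \ A u ≠ ∅` and `Nout u ∩ A u ∩ B u = ∅`. -/
def FwdInferable (u : V) : Prop :=
  (G.Nout u \ G.A u).Nonempty ∧ G.Nout u ∩ (G.A u ∩ G.B u) = ∅

/-- `(u, v)` is a forward inference edge if `u` is forward inferable and
`v ∈ Nout u \ A u`. -/
def FwdEdge (u v : V) : Prop := G.FwdInferable u ∧ v ∈ G.Nout u \ G.A u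

/-- `u` is backward inferable if `Nin u \ B u ≠ ∅` and `Nin u ∩ A u ∩ B u = ∅`. -/
def BwdInferable (u : V) : Prop :=
  (G.Nin u \ G.B u).Nonempty ∧ G.Nin u ∩ (G.A u ∩ G.B u) = ∅

/-- `(u, v)` is a backward inference edge if `u` is backward inferable and
`v ∈ Nin u \ B u`. -/
def BwdEdge (u v : V) : Prop := G.BwdInferable u ∧ v ∈ G.Nin u \ G.B u

/-- `S ⊆ E` is a valid edge-instrumentation set for vertex coverage if any
two execution traces whose edge coverage profiles agree on `S` have equal
vertex coverage profiles. -/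
def ValidEdgeInstr (S : Set (V × V)) : Prop :=
  ∀ T T' : List (List V), G.IsTrace T → G.IsTrace T' →
    edgeCover T ∩ S = edgeCover T' ∩ S → cover T = cover T'

end CFG

namespace List

variable {α : Type*} {r : α → α → Prop} {a b u : α}

theorem exists_isChain_cons_notMem_of_reflTransGen (ha : a ≠ u)
    (h : Relation.ReflTransGen (fun x y => r x y ∧ x ≠ u ∧ y ≠ u) a b) :
    ∃ l, IsChain r (a :: l) ∧ (a :: l).getLast? = some b ∧ u ∉ a :: l := by
  obtain ⟨l, hl, hlast⟩ := exists_isChain_cons_of_relationReflTransGen h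
  refine ⟨l, hl.imp fun _ _ hxy => hxy.1, by simp [← hlast, getLast?_eq_some_getLast], fun hu => ?_⟩
  exact hl.induction (· ≠ u) _ (fun _ _ hxy _ => hxy.2.2) (fun _ => ha) u hu rfl

theorem IsChain.append_of_getLast?_eq {l₁ l₂ : List α} (h₁ : IsChain r l₁)
    (hb : l₁.getLast? = some b) (h₂ : IsChain r (b :: l₂)) :
    IsChain r (l₁ ++ l₂) ∧ (l₁ ++ l₂).getLast? = (b :: l₂).getLast? := by
  refine ⟨h₁.append h₂.tail fun x hx y hy => ?_, by simp [getLast?_append, hb, getLast?_cons]⟩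
  rw [hb, Option.mem_some_iff] at hx
  exact hx ▸ h₂.rel_head? hy

end List

namespace CFG

variable {V : Type*} (G : CFG V)

theorem isWalk_append {l₁ l₂ : List V} {b : V} (hs : l₁.head? = some G.s)
    (h₁ : l₁.IsChain G.E) (hb : l₁.getLast? = some b) (h₂ : (b :: l₂).IsChain G.E)
    (ht : (b :: l₂).getLast? = some G.t) : G.IsWalk (l₁ ++ l₂) := by
  obtain ⟨hchain, hlast⟩ := h₁.append_of_getLast?_eq hb h₂
  refine ⟨?_, hlast.trans ht, hchain⟩
  cases l₁ with
  | nil => simp at hs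
  | cons => exact hs

theorem cover_mem_profiles {T : List (List V)} (hT : G.IsTrace T) : cover T ∈ G.Profiles :=
  ⟨T, hT, rfl⟩

variable {G} in
theorem ValidInstr.mem_of_insert_mem_profiles {S C : Set V} {u : V} (hS : G.ValidInstr S)
    (hC : C ∈ G.Profiles) (hC' : insert u C ∈ G.Profiles) (hu : u ∉ C) : u ∈ S := by
  by_contra huS
  have hCC' := hS _ hC' _ hC (Set.insert_inter_of_notMem huS)
  exact hu (hCC' ▸ Set.mem_insert u C)

end CFG

theorem stmt_2_general {V : Type*} (G : CFG V) (S : Set V)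
    (hS : G.ValidInstr S) (u : V) (hu : G.Ambiguous u) : u ∈ S := by
  obtain ⟨⟨x, hxu, ⟨hx, hsx⟩, -, hxt⟩, ⟨y, huy, ⟨hy, hsy⟩, -, hyt⟩⟩ := hu
  have hs : G.s ≠ u := fun h => G.no_in_s x (h ▸ hxu)
  obtain ⟨p, hp, hpx, hup⟩ := List.exists_isChain_cons_notMem_of_reflTransGen hs hsx
  obtain ⟨q, hq, hqt, huq⟩ := List.exists_isChain_cons_notMem_of_reflTransGen hx hxt
  obtain ⟨p', hp', hpy, hup'⟩ := List.exists_isChain_cons_notMem_of_reflTransGen hs hsy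
  obtain ⟨q', hq', hqt', huq'⟩ := List.exists_isChain_cons_notMem_of_reflTransGen hy hyt
  set T' := [G.s :: p ++ q, G.s :: p' ++ q']
  set T := (G.s :: p ++ u :: y :: q') :: T'
  have hT' : G.IsTrace T' := by
    simp only [T', CFG.IsTrace, List.forall_mem_cons]
    exact ⟨G.isWalk_append rfl hp hpx hq hqt, G.isWalk_append rfl hp' hpy hq' hqt', by simp⟩
  have hT : G.IsTrace T := List.forall_mem_cons.2 ⟨G.isWalk_append rfl hp hpx
    (hq'.cons_cons huy |>.cons_cons hxu) (by simpa using hqt'), hT'⟩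
  have hcover : cover T = insert u (cover T') := by
    have hy_mem := List.mem_of_getLast? hpy
    ext v
    simp only [cover, T, T', Set.mem_insert_iff, List.mem_cons,
      List.mem_append, exists_eq_or_imp, exists_eq_left, List.not_mem_nil, or_false]
    grind
  refine hS.mem_of_insert_mem_profiles (G.cover_mem_profiles hT')
    (hcover ▸ G.cover_mem_profiles hT) ?_
  simp_all [cover, T']

/-- If `S` is a valid instrumentation set of a control-flow graph `G`, then
every ambiguous vertex `u` of `G` belongs to `S`. -/
theorem stmt_2 {V : Type*} [Finite V] (G : CFG V) (S : Set V)
    (hS : G.ValidInstr S) (u : V) (hu : G.Ambiguous u) : u ∈ S :=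
  stmt_2_general G S hS u hu
end

section
/- Let u be a forward inferable vertex of a control-flow graph G and let X = N^out(u) \ A(u). Then for every coverage profile C ∈ 𝒞, u ∈ C if and only if X ∩ C ≠ ∅. -/
namespace List

variable {α : Type*} {r : α → α → Prop} {l : List α} {a b x : α}

theorem exists_eq_append_cons_notMem_right (h : a ∈ l) :
    ∃ l₁ l₂, l = l₁ ++ a :: l₂ ∧ a ∉ l₂ := by
  induction l with
  | nil => cases h
  | cons c l ih =>
    by_cases ha : a ∈ l
    · obtain ⟨l₁, l₂, rfl, ha₂⟩ := ih ha
      exact ⟨c :: l₁, l₂, rfl, ha₂⟩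
    · obtain rfl := (mem_cons.1 h).resolve_right ha
      exact ⟨[], l, rfl, ha⟩

theorem IsChain.reflTransGen_of_head?_eq_some (hl : IsChain r l) (ha : l.head? = some a)
    (hx : x ∈ l) : Relation.ReflTransGen r a x := by
  obtain ⟨l, rfl⟩ := head?_eq_some_iff.1 ha
  exact hl.induction (Relation.ReflTransGen r a) _ (fun _ _ hxy hx => hx.tail hxy)
    (fun _ => .refl) x hx

theorem IsChain.reflTransGen_of_getLast?_eq_some (hl : IsChain r l) (hb : l.getLast? = some b)
    (hx : x ∈ l) : Relation.ReflTransGen r x b := by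
  obtain ⟨l, rfl⟩ := getLast?_eq_some_iff.1 hb
  exact hl.backwards_induction (Relation.ReflTransGen r · b) _ (fun _ _ hxy hy => hy.head hxy)
    (fun _ => getLast_concat ▸ .refl) x hx

end List

namespace CFG

variable {V : Type*} (G : CFG V) {u x : V} {l w : List V}

theorem ne_t_of_E {v : V} (h : G.E u v) : u ≠ G.t := by
  rintro rfl
  exact G.no_out_t v h

theorem isChain_avoiding (hl : l.IsChain G.E) (hu : u ∉ l) :
    l.IsChain (fun x y => G.E x y ∧ x ≠ u ∧ y ≠ u) :=
  hl.imp_of_mem_imp fun _ _ ha hb hab =>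
    ⟨hab, ne_of_mem_of_not_mem ha hu, ne_of_mem_of_not_mem hb hu⟩

theorem mem_A_of_mem_walk (hw : G.IsWalk w) (hu : u ∉ w) (hx : x ∈ w) : x ∈ G.A u :=
  ⟨ne_of_mem_of_not_mem hx hu,
    (G.isChain_avoiding hw.2.2 hu).reflTransGen_of_head?_eq_some hw.1 hx⟩

theorem mem_B_of_isChain (hl : l.IsChain G.E) (ht : l.getLast? = some G.t) (hu : u ∉ l)
    (hx : x ∈ l) : x ∈ G.B u :=
  ⟨ne_of_mem_of_not_mem hx hu,
    (G.isChain_avoiding hl hu).reflTransGen_of_getLast?_eq_some ht hx⟩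

theorem exists_out_mem_B_of_mem_walk (hw : G.IsWalk w) (hu : u ∈ w) (hut : u ≠ G.t) :
    ∃ v ∈ w, G.E u v ∧ v ∈ G.B u := by
  obtain ⟨l₁, l₂, rfl, hu₂⟩ := List.exists_eq_append_cons_notMem_right hu
  obtain ⟨-, ht, hchain⟩ := hw
  cases l₂ with
  | nil => exact absurd (by simpa using ht) hut
  | cons v l₂ =>
    have hsuffix : (u :: v :: l₂).IsChain G.E := hchain.right_of_append
    obtain ⟨huv, hrest⟩ := List.isChain_cons_cons.1 hsuffix
    exact ⟨v, by simp, huv, G.mem_B_of_isChain hrest (by simpa using ht) hu₂ (by simp)⟩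

end CFG

theorem stmt_3_general {V : Type*} (G : CFG V) (u : V)
    (hu : G.FwdInferable u) (C : Set V) (hC : C ∈ G.Profiles) :
    u ∈ C ↔ ((G.Nout u \ G.A u) ∩ C).Nonempty := by
  obtain ⟨T, hT, rfl⟩ := hC
  obtain ⟨⟨x₀, hx₀, -⟩, hdisj⟩ := hu
  constructor
  · rintro ⟨w, hwT, huw⟩
    obtain ⟨v, hvw, huv, hvB⟩ :=
      G.exists_out_mem_B_of_mem_walk (hT w hwT) huw (G.ne_t_of_E hx₀)
    exact ⟨v, ⟨huv, fun hvA => hdisj.subset ⟨huv, hvA, hvB⟩⟩, w, hwT, hvw⟩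
  · rintro ⟨x, ⟨-, hxA⟩, w, hwT, hxw⟩
    by_contra huw
    exact hxA (G.mem_A_of_mem_walk (hT w hwT) (fun h => huw ⟨w, hwT, h⟩) hxw)

/-- Let `u` be a forward inferable vertex and `X = Nout u \ A u`. Then for
every coverage profile `C ∈ 𝒞`, `u ∈ C` iff `X ∩ C ≠ ∅`. -/
theorem stmt_3 {V : Type*} [Finite V] (G : CFG V) (u : V)
    (hu : G.FwdInferable u) (C : Set V) (hC : C ∈ G.Profiles) :
    u ∈ C ↔ ((G.Nout u \ G.A u) ∩ C).Nonempty :=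
  stmt_3_general G u hu C hC
end

section
/- Let u be a backward inferable vertex of a control-flow graph G and let X = N^in(u) \ B(u). Then for every coverage profile C ∈ 𝒞, u ∈ C if and only if X ∩ C ≠ ∅. -/
/-!
If a walk from `s` visits `u`, then `u ≠ s` and the vertex just before the first visit of `u`
is an in-neighbour of `u` reached from `s` avoiding `u`, i.e. it lies in `Nin u ∩ A u`;
backward inferability says such a vertex is not in `B u`. Conversely, a walk through
`x ∈ Nin u \ B u` must visit `u`, since otherwise its suffix from `x` to `t` avoids `u`
and puts `x` in `B u`.
-/

namespace List

variable {α : Type*} {r : α → α → Prop} {l : List α} {a b u : α}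

theorem IsChain.reflTransGen_of_mem_of_getLast? (hl : l.IsChain r) (ha : a ∈ l)
    (hb : l.getLast? = some b) : Relation.ReflTransGen r a b :=
  hl.backwards_induction (Relation.ReflTransGen r · b) l
    (fun _ _ hxy hy => hy.head hxy)
    (fun hne => by rw [Option.some.inj ((getLast?_eq_some_getLast hne).symm.trans hb)]) a ha

theorem IsChain.exists_reflTransGen_avoiding_of_mem (hl : l.IsChain r) (ha : l.head? = some a)
    (hau : a ≠ u) (hu : u ∈ l) :
    ∃ x ∈ l, r x u ∧ x ≠ u ∧ Relation.ReflTransGen (fun x y => r x y ∧ x ≠ u ∧ y ≠ u) a x := by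
  obtain ⟨p, q, rfl, hup⟩ := eq_append_cons_of_mem hu
  have hp : p ≠ [] := by
    rintro rfl
    exact hau (Option.some.inj ha).symm
  obtain ⟨hp_chain, -, hlink⟩ := isChain_append.1 hl
  have hhead : p.head hp = a := by simpa [head?_append, head?_eq_some_head hp] using ha
  have hp_avoid : p.IsChain (fun x y => r x y ∧ x ≠ u ∧ y ≠ u) :=
    hp_chain.imp_of_mem_imp fun x y hx hy hxy =>
      ⟨hxy, ne_of_mem_of_not_mem hx hup, ne_of_mem_of_not_mem hy hup⟩
  refine ⟨p.getLast hp, mem_append_left _ (getLast_mem hp),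
    hlink _ (getLast?_eq_some_getLast hp) _ rfl, ne_of_mem_of_not_mem (getLast_mem hp) hup, ?_⟩
  exact hhead ▸ relationReflTransGen_of_exists_isChain p hp_avoid hp

end List

namespace CFG

variable {V : Type*} {G : CFG V} {u x : V} {w : List V}

theorem IsWalk.exists_mem_Nin_inter_A (hw : G.IsWalk w) (hus : u ≠ G.s) (hu : u ∈ w) :
    ∃ x ∈ w, x ∈ G.Nin u ∩ G.A u := by
  obtain ⟨x, hxw, hxu, hx_ne, hx_reach⟩ :=
    List.IsChain.exists_reflTransGen_avoiding_of_mem hw.2.2 hw.1 hus.symm hu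
  exact ⟨x, hxw, hxu, hx_ne, hx_reach⟩

theorem IsWalk.mem_B_of_notMem (hw : G.IsWalk w) (hu : u ∉ w) (hx : x ∈ w) : x ∈ G.B u := by
  have hw_avoid : w.IsChain (fun x y => G.E x y ∧ x ≠ u ∧ y ≠ u) :=
    List.IsChain.imp_of_mem_imp (fun _ _ ha hb hab =>
      ⟨hab, ne_of_mem_of_not_mem ha hu, ne_of_mem_of_not_mem hb hu⟩) hw.2.2
  exact ⟨ne_of_mem_of_not_mem hx hu, hw_avoid.reflTransGen_of_mem_of_getLast? hx hw.2.1⟩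

theorem BwdInferable.ne_s (hu : G.BwdInferable u) : u ≠ G.s := by
  rintro rfl
  obtain ⟨x, hx, -⟩ := hu.1
  exact G.no_in_s x hx

theorem BwdInferable.notMem_B (hu : G.BwdInferable u) (hin : x ∈ G.Nin u) (hA : x ∈ G.A u) :
    x ∉ G.B u :=
  fun hB => (Set.eq_empty_iff_forall_notMem.1 hu.2) x ⟨hin, hA, hB⟩

end CFG

theorem stmt_4_general {V : Type*} (G : CFG V) (u : V)
    (hu : G.BwdInferable u) (C : Set V) (hC : C ∈ G.Profiles) :
    u ∈ C ↔ ((G.Nin u \ G.B u) ∩ C).Nonempty := by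
  obtain ⟨T, hT, rfl⟩ := hC
  constructor
  · rintro ⟨w, hwT, huw⟩
    obtain ⟨x, hxw, hxin, hxA⟩ := (hT w hwT).exists_mem_Nin_inter_A hu.ne_s huw
    exact ⟨x, ⟨hxin, hu.notMem_B hxin hxA⟩, w, hwT, hxw⟩
  · rintro ⟨x, ⟨-, hxB⟩, w, hwT, hxw⟩
    by_contra huC
    exact hxB ((hT w hwT).mem_B_of_notMem (fun huw => huC ⟨w, hwT, huw⟩) hxw)

/-- Let `u` be a backward inferable vertex and `X = Nin u \ B u`. Then for
every coverage profile `C ∈ 𝒞`, `u ∈ C` iff `X ∩ C ≠ ∅`. -/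
theorem stmt_4 {V : Type*} [Finite V] (G : CFG V) (u : V)
    (hu : G.BwdInferable u) (C : Set V) (hC : C ∈ G.Profiles) :
    u ∈ C ↔ ((G.Nin u \ G.B u) ∩ C).Nonempty :=
  stmt_4_general G u hu C hC
end

section
/- Let (α, φ, β) be a partition of the vertex set of a control-flow graph G such that every vertex in φ is forward inferable, every vertex in β is backward inferable, and the associated inference graph — whose edge set consists of all forward inference edges out of vertices of φ together with all backward inference edges out of vertices of β — is acyclic. Then α is a valid instrumentation set of G. -/
/-!
Covering a vertex `u` is decided by its inference successors. If `u` is backward inferable and a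
walk visits `u`, the vertex just before the first visit is reached from `s` avoiding `u`, so it
lies in `A u` and hence, by inferability, outside `B u`: a backward inference edge into the
trace. Conversely a walk through some `v ∉ B u` must meet `u` on its way from `v` to `t`. Reversing
all edges swaps `A` and `B` and gives the forward case. Since the inference graph is acyclic on a
finite vertex set, well-founded induction along it reduces coverage of every vertex to coverage of
`α`.
-/

open Relation Function

theorem cover_map_reverse {V : Type*} (T : List (List V)) :
    cover (T.map List.reverse) = cover T := by
  ext v
  simp only [cover, List.mem_map, Set.mem_ofPred_eq]
  exact ⟨fun ⟨_, ⟨w, hw, rfl⟩, hv⟩ => ⟨w, hw, List.mem_reverse.mp hv⟩,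
    fun ⟨w, hw, hv⟩ => ⟨_, ⟨w, hw, rfl⟩, List.mem_reverse.mpr hv⟩⟩

theorem Finite.wellFounded_swap_of_not_transGen_self {α : Type*} [Finite α]
    {r : α → α → Prop} (h : ∀ a, ¬ TransGen r a a) : WellFounded (swap r) :=
  have : Std.Irrefl (TransGen (swap r)) := ⟨fun a ha => h a (transGen_swap.mp ha)⟩
  Subrelation.wf TransGen.single (Finite.wellFounded_of_trans_of_irrefl _)

theorem List.IsChain.reflTransGen_avoiding {α : Type*} {r : α → α → Prop} {u : α}
    {l : List α} (hl : l.IsChain r) (hne : l ≠ []) (hu : u ∉ l) :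
    ReflTransGen (fun x y => r x y ∧ x ≠ u ∧ y ≠ u) (l.head hne) (l.getLast hne) :=
  List.relationReflTransGen_of_exists_isChain l
    (hl.imp_of_mem_imp fun _ _ ha hb hab => ⟨hab, ne_of_mem_of_not_mem ha hu,
      ne_of_mem_of_not_mem hb hu⟩) hne

namespace CFG

variable {V : Type*} {G : CFG V}

theorem IsWalk.getLast_mem_A {w₁ w₂ : List V} (hw : G.IsWalk (w₁ ++ w₂)) (hne : w₁ ≠ [])
    {u : V} (hu : u ∉ w₁) : w₁.getLast hne ∈ G.A u := by
  obtain ⟨hs, -, hchain⟩ := hw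
  have hhead : w₁.head hne = G.s := by
    simpa [List.head?_append, List.head?_eq_some_head hne] using hs
  refine ⟨ne_of_mem_of_not_mem (List.getLast_mem hne) hu, ?_⟩
  simpa [hhead] using (List.isChain_append.mp hchain).1.reflTransGen_avoiding hne hu

theorem IsWalk.head_mem_B {w₁ w₂ : List V} (hw : G.IsWalk (w₁ ++ w₂)) (hne : w₂ ≠ [])
    {u : V} (hu : u ∉ w₂) : w₂.head hne ∈ G.B u := by
  obtain ⟨-, ht, hchain⟩ := hw
  have hlast : w₂.getLast hne = G.t := by
    simpa [List.getLast?_append, List.getLast?_eq_some_getLast hne] using ht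
  refine ⟨ne_of_mem_of_not_mem (List.head_mem hne) hu, ?_⟩
  simpa [hlast] using (List.isChain_append.mp hchain).2.1.reflTransGen_avoiding hne hu

theorem mem_cover_iff_exists_bwdEdge {u : V} (hu : G.BwdInferable u) {T : List (List V)}
    (hT : G.IsTrace T) : u ∈ cover T ↔ ∃ v, G.BwdEdge u v ∧ v ∈ cover T := by
  constructor
  · rintro ⟨w, hwT, huw⟩
    obtain ⟨w₁, w₂, rfl, hu₁⟩ := List.eq_append_cons_of_mem huw
    have hw := hT _ hwT
    have hne : w₁ ≠ [] := by
      rintro rfl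
      obtain ⟨x, hx, -⟩ := hu.1
      have hus : u = G.s := by simpa using hw.1
      exact G.no_in_s x (hus ▸ hx)
    set x := w₁.getLast hne
    have hxu : G.E x u :=
      (List.isChain_append.mp hw.2.2).2.2 x (List.getLast?_eq_some_getLast hne) u rfl
    have hxB : x ∉ G.B u := fun hxB =>
      hu.2.subset ⟨hxu, hw.getLast_mem_A hne hu₁, hxB⟩
    exact ⟨x, ⟨hu, hxu, hxB⟩, w₁ ++ u :: w₂, hwT, List.mem_append_left _ (List.getLast_mem hne)⟩
  · rintro ⟨v, ⟨-, -, hvB⟩, w, hwT, hvw⟩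
    by_contra huT
    obtain ⟨w₁, w₂, rfl⟩ := List.append_of_mem hvw
    exact hvB ((hT _ hwT).head_mem_B (List.cons_ne_nil v w₂)
      fun hu => huT ⟨_, hwT, List.mem_append_right _ hu⟩)

variable (G) in
def reverse : CFG V where
  E := swap G.E
  s := G.t
  t := G.s
  s_ne_t := G.s_ne_t.symm
  no_in_s := G.no_out_t
  no_out_t := G.no_in_s
  reach_from_s v := reflTransGen_swap.mpr (G.reach_to_t v)
  reach_to_t v := reflTransGen_swap.mpr (G.reach_from_s v)

theorem reverse_avoiding (u : V) :
    (fun x y => G.reverse.E x y ∧ x ≠ u ∧ y ≠ u) = swap fun x y => G.E x y ∧ x ≠ u ∧ y ≠ u := by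
  funext x y
  simp only [reverse, swap, and_comm (a := x ≠ u)]

theorem reverse_A (u : V) : G.reverse.A u = G.B u := by
  ext v
  simp only [A, B, reverse_avoiding]
  exact and_congr_right fun _ => reflTransGen_swap

theorem reverse_B (u : V) : G.reverse.B u = G.A u := by
  ext v
  simp only [B, A, reverse_avoiding]
  exact and_congr_right fun _ => reflTransGen_swap

theorem reverse_bwdInferable_iff {u : V} : G.reverse.BwdInferable u ↔ G.FwdInferable u := by
  simp only [BwdInferable, FwdInferable, reverse_A, reverse_B, Set.inter_comm (G.B u)]
  rfl

theorem reverse_bwdEdge_iff {u v : V} : G.reverse.BwdEdge u v ↔ G.FwdEdge u v := by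
  simp only [BwdEdge, FwdEdge, reverse_bwdInferable_iff, reverse_B]
  rfl

theorem IsTrace.reverse {T : List (List V)} (hT : G.IsTrace T) :
    G.reverse.IsTrace (T.map List.reverse) := by
  simp only [IsTrace, List.mem_map, forall_exists_index, and_imp, forall_apply_eq_imp_iff₂]
  intro w hw
  obtain ⟨hs, ht, hchain⟩ := hT w hw
  exact ⟨List.head?_reverse ▸ ht, List.getLast?_reverse ▸ hs, List.isChain_reverse.mpr hchain⟩

theorem mem_cover_iff_exists_fwdEdge {u : V} (hu : G.FwdInferable u) {T : List (List V)}
    (hT : G.IsTrace T) : u ∈ cover T ↔ ∃ v, G.FwdEdge u v ∧ v ∈ cover T := by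
  simpa only [cover_map_reverse, reverse_bwdEdge_iff] using
    mem_cover_iff_exists_bwdEdge (reverse_bwdInferable_iff.mpr hu) hT.reverse

end CFG

theorem stmt_5_general {V : Type*} [Finite V] (G : CFG V) (α φ β : Set V)
    (hcover : α ∪ φ ∪ β = Set.univ)
    (hφ : ∀ u ∈ φ, G.FwdInferable u)
    (hβ : ∀ u ∈ β, G.BwdInferable u)
    (hacyc : ∀ v : V, ¬ Relation.TransGen
      (fun x y => (x ∈ φ ∧ G.FwdEdge x y) ∨ (x ∈ β ∧ G.BwdEdge x y)) v v) :
    G.ValidInstr α := by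
  rintro _ ⟨T, hT, rfl⟩ _ ⟨T', hT', rfl⟩ hα
  ext u
  induction u using (Finite.wellFounded_swap_of_not_transGen_self hacyc).induction with
  | _ u ih =>
  rcases Set.eq_univ_iff_forall.mp hcover u with (hu | hu) | hu
  · simpa [hu] using Set.ext_iff.mp hα u
  · rw [G.mem_cover_iff_exists_fwdEdge (hφ u hu) hT, G.mem_cover_iff_exists_fwdEdge (hφ u hu) hT']
    exact exists_congr fun v => and_congr_right fun he => ih v (.inl ⟨hu, he⟩)
  · rw [G.mem_cover_iff_exists_bwdEdge (hβ u hu) hT, G.mem_cover_iff_exists_bwdEdge (hβ u hu) hT']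
    exact exists_congr fun v => and_congr_right fun he => ih v (.inr ⟨hu, he⟩)

/-- If `(α, φ, β)` is a partition of `V` with every vertex of `φ` forward
inferable, every vertex of `β` backward inferable, and the associated
inference graph (forward inference edges out of `φ` together with backward
inference edges out of `β`) acyclic, then `α` is a valid instrumentation set. -/
theorem stmt_5 {V : Type*} [Finite V] (G : CFG V) (α φ β : Set V)
    (hαφ : Disjoint α φ) (hαβ : Disjoint α β) (hφβ : Disjoint φ β)
    (hcover : α ∪ φ ∪ β = Set.univ)
    (hφ : ∀ u ∈ φ, G.FwdInferable u)
    (hβ : ∀ u ∈ β, G.BwdInferable u)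
    (hacyc : ∀ v : V, ¬ Relation.TransGen
      (fun x y => (x ∈ φ ∧ G.FwdEdge x y) ∨ (x ∈ β ∧ G.BwdEdge x y)) v v) :
    G.ValidInstr α :=
  stmt_5_general G α φ β hcover hφ hβ hacyc
end

section
/- Let v_1, …, v_k (k ≥ 1) be distinct vertices of a control-flow graph G such that (v_i, v_{i+1}) is a forward inference edge and (v_{i+1}, v_i) is a backward inference edge for all 1 ≤ i < k. Suppose there exist an in-neighbor x of v_1 with x ∈ A(v_1) ∩ B(v_1) and an out-neighbor y of v_k with y ∈ A(v_k) ∩ B(v_k). Then every valid instrumentation set S of G contains at least one of the vertices v_1, …, v_k. -/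
/-!
Suppose `S` misses every `v i`. Through `x` there is an `s`–`t` walk `W₂` avoiding `v 0`, and
through `y` one, `W₃`, avoiding `v (k-1)`. Splicing the part of `W₂` up to `x`, the chain
`v 0 → ⋯ → v (k-1)` and the part of `W₃` from `y` gives a third walk `W₁`. The traces
`{W₁, W₂, W₃}` and `{W₂, W₃}` cover the same vertices apart from some `v i`, so they agree on `S`;
validity of `S` then puts `v 0` on `W₂` or `W₃`, hence on `W₃`. But a walk through `v i` passes
through `v (i+1)`, because `v i ∉ B (v (i+1))`; so `v (k-1)` lies on `W₃`, a contradiction.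
-/

namespace Relation

variable {α : Type*} {R : α → α → Prop} {a b c z : α} {l l₁ l₂ : List α}

/-- `a :: l` is an `R`-path from `a` to `b`; leaving `a` out of `l` makes paths compose by `++`. -/
def IsPath (R : α → α → Prop) (a b : α) (l : List α) : Prop :=
  (a :: l).IsChain R ∧ (a :: l).getLast (List.cons_ne_nil a l) = b

@[simp]
theorem isPath_nil : IsPath R a b [] ↔ a = b :=
  ⟨fun h => h.2, fun h => ⟨.singleton a, h⟩⟩

@[simp]
theorem isPath_cons : IsPath R a c (b :: l) ↔ R a b ∧ IsPath R b c l := by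
  simp only [IsPath, List.isChain_cons_cons, List.getLast_cons_cons, and_assoc]

namespace IsPath

theorem append (h₁ : IsPath R a b l₁) (h₂ : IsPath R b c l₂) : IsPath R a c (l₁ ++ l₂) := by
  induction l₁ generalizing a with
  | nil => rwa [isPath_nil.1 h₁]
  | cons d l₁ ih =>
    rw [isPath_cons] at h₁
    exact isPath_cons.2 ⟨h₁.1, ih h₁.2⟩

theorem mem_end (h : IsPath R a b l) : b ∈ a :: l :=
  h.2 ▸ List.getLast_mem _

theorem exists_suffix (h : IsPath R a b l) (hz : z ∈ a :: l) :
    ∃ l', IsPath R z b l' ∧ l' ⊆ l := by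
  induction l generalizing a with
  | nil => exact ⟨[], List.mem_singleton.1 hz ▸ h, List.Subset.refl _⟩
  | cons c l ih =>
    rcases List.mem_cons.1 hz with rfl | hz
    · exact ⟨_, h, List.Subset.refl _⟩
    · obtain ⟨l', hl', hsub⟩ := ih (isPath_cons.1 h).2 hz
      exact ⟨l', hl', List.Subset.trans hsub (List.subset_cons_self _ _)⟩

theorem reflTransGen_restrict {p : α → Prop} (h : IsPath R a b l) (hp : ∀ z ∈ a :: l, p z) :
    ReflTransGen (fun x y => R x y ∧ p x ∧ p y) a b := by
  induction l generalizing a with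
  | nil => rw [isPath_nil.1 h]
  | cons c l ih =>
    rw [isPath_cons] at h
    refine .head ⟨h.1, hp a List.mem_cons_self, hp c (by simp)⟩ (ih h.2 fun z hz => ?_)
    exact hp z (List.mem_cons_of_mem _ hz)

end IsPath

theorem exists_isPath_of_reflTransGen_restrict {p : α → Prop}
    (h : ReflTransGen (fun x y => R x y ∧ p x ∧ p y) a b) :
    ∃ l, IsPath R a b l ∧ ∀ z ∈ l, p z := by
  induction h using ReflTransGen.head_induction_on with
  | refl => exact ⟨[], isPath_nil.2 rfl, by simp⟩
  | head hac _ ih =>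
    obtain ⟨l, hl, hp⟩ := ih
    exact ⟨_ :: l, isPath_cons.2 ⟨hac.1, hl⟩, by simpa [hac.2.2] using hp⟩

theorem isPath_ofFn {n : ℕ} (hn : 0 < n) {f : Fin n → α} (h₀ : R a (f ⟨0, hn⟩))
    (hf : ∀ i (hi : i + 1 < n), R (f ⟨i, Nat.lt_of_succ_lt hi⟩) (f ⟨i + 1, hi⟩)) :
    IsPath R a (f ⟨n - 1, Nat.sub_one_lt_of_lt hn⟩) (List.ofFn f) := by
  have hne : List.ofFn f ≠ [] := by rw [Ne, List.ofFn_eq_nil_iff]; omega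
  refine ⟨List.isChain_cons.2 ⟨?_, List.isChain_ofFn.2 hf⟩, ?_⟩
  · rw [List.head?_eq_some_head hne, List.head_ofFn]
    simpa using h₀
  · rw [List.getLast_cons hne, List.getLast_ofFn]

end Relation

theorem mem_cover_cons {V : Type*} {w : List V} {T : List (List V)} {z : V} :
    z ∈ cover (w :: T) ↔ z ∈ w ∨ z ∈ cover T := by
  simp [cover]

namespace CFG

open Relation

variable {V : Type*}

/-- The traces `w :: T` and `T` agree on `S`. -/
theorem ValidInstr.forall_mem_cover {G : CFG V} {S : Set V} (hS : G.ValidInstr S)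
    {w : List V} {T : List (List V)} (hw : G.IsWalk w) (hT : G.IsTrace T)
    (h : ∀ z ∈ w, z ∈ S → z ∈ cover T) : ∀ z ∈ w, z ∈ cover T := by
  have hwT : G.IsTrace (w :: T) := List.forall_mem_cons.2 ⟨hw, hT⟩
  have heq : cover (w :: T) = cover T := by
    refine hS _ ⟨_, hwT, rfl⟩ _ ⟨_, hT, rfl⟩ (Set.ext fun z => ?_)
    simp only [Set.mem_inter_iff, mem_cover_cons]
    grind
  exact fun z hz => heq ▸ mem_cover_cons.2 (.inl hz)

variable (G : CFG V) {a u x z : V} {l : List V}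

theorem isWalk_of_isPath (h : IsPath G.E G.s G.t l) : G.IsWalk (G.s :: l) :=
  ⟨rfl, by rw [List.getLast?_eq_some_getLast (List.cons_ne_nil _ _), h.2], h.1⟩

theorem s_ne_of_mem_A (hx : x ∈ G.A u) : G.s ≠ u := by
  obtain ⟨hxu, hsx⟩ := hx
  rcases hsx.cases_head with rfl | ⟨c, hsc, -⟩
  exacts [hxu, hsc.2.1]

theorem exists_walk_through_avoiding (hx : x ∈ G.A u ∩ G.B u) :
    ∃ l₁ l₂, IsPath G.E G.s x l₁ ∧ IsPath G.E x G.t l₂ ∧ u ∉ G.s :: (l₁ ++ l₂) := by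
  obtain ⟨l₁, hl₁, hu₁⟩ := exists_isPath_of_reflTransGen_restrict (p := (· ≠ u)) hx.1.2
  obtain ⟨l₂, hl₂, hu₂⟩ := exists_isPath_of_reflTransGen_restrict (p := (· ≠ u)) hx.2.2
  refine ⟨l₁, l₂, hl₁, hl₂, ?_⟩
  simp only [List.mem_cons, List.mem_append, not_or]
  exact ⟨(G.s_ne_of_mem_A hx.1).symm, fun h => hu₁ u h rfl, fun h => hu₂ u h rfl⟩

theorem mem_of_not_mem_B (h : IsPath G.E a G.t l) (hz : z ∈ a :: l) (hzu : z ≠ u)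
    (hB : z ∉ G.B u) : u ∈ a :: l := by
  by_contra hu
  obtain ⟨l', hl', hsub⟩ := h.exists_suffix hz
  have hsub' : z :: l' ⊆ a :: l :=
    List.cons_subset.2 ⟨hz, List.Subset.trans hsub (List.subset_cons_self _ _)⟩
  exact hB ⟨hzu, hl'.reflTransGen_restrict fun w hw hwu => hu (hwu ▸ hsub' hw)⟩

theorem mem_of_isChain_not_mem_B (h : IsPath G.E a G.t l) {c : List V}
    (hc : c.IsChain fun z w => z ≠ w ∧ z ∉ G.B w)
    (hhead : ∀ hne : c ≠ [], c.head hne ∈ a :: l) : ∀ z ∈ c, z ∈ a :: l :=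
  hc.induction _ _ (fun _ _ hzw hz => G.mem_of_not_mem_B h hz hzw.1 hzw.2) hhead

end CFG

open Relation CFG

/-- Let `v 0, …, v (k-1)` (`k ≥ 1`) be distinct vertices such that each
`(v i, v (i+1))` is a forward inference edge and each `(v (i+1), v i)` is a
backward inference edge. If the first vertex has an in-neighbor in
`A(v 0) ∩ B(v 0)` and the last vertex has an out-neighbor in
`A(v (k-1)) ∩ B(v (k-1))`, then every valid instrumentation set contains at
least one of the vertices `v i`. -/
theorem stmt_11 {V : Type*} (G : CFG V) (k : ℕ) (hk : 1 ≤ k)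
    (v : Fin k → V) (hinj : Function.Injective v)
    (hbwd : ∀ i : ℕ, ∀ h : i + 1 < k, G.BwdEdge (v ⟨i + 1, h⟩) (v ⟨i, by omega⟩))
    (x : V) (hx1 : x ∈ G.Nin (v ⟨0, by omega⟩))
    (hx2 : x ∈ G.A (v ⟨0, by omega⟩) ∩ G.B (v ⟨0, by omega⟩))
    (y : V) (hy1 : y ∈ G.Nout (v ⟨k - 1, by omega⟩))
    (hy2 : y ∈ G.A (v ⟨k - 1, by omega⟩) ∩ G.B (v ⟨k - 1, by omega⟩))
    (S : Set V) (hS : G.ValidInstr S) :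
    ∃ i : Fin k, v i ∈ S := by
  by_contra! hvS
  obtain ⟨p₂, q₂, hp₂, hq₂, hv₂⟩ := G.exists_walk_through_avoiding hx2
  obtain ⟨p₃, q₃, hp₃, hq₃, hv₃⟩ := G.exists_walk_through_avoiding hy2
  have hv : IsPath G.E x (v ⟨k - 1, by omega⟩) (List.ofFn v) :=
    isPath_ofFn hk hx1 fun i hi => (hbwd i hi).2.1
  have hW₁ := G.isWalk_of_isPath (hp₂.append (hv.append (isPath_cons.2 ⟨hy1, hq₃⟩)))
  have hy : y ∈ G.s :: (p₃ ++ q₃) :=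
    (List.sublist_append_left p₃ q₃).cons_cons G.s |>.subset hp₃.mem_end
  have hcov := hS.forall_mem_cover (T := [G.s :: (p₂ ++ q₂), G.s :: (p₃ ++ q₃)]) hW₁
    (by simp [IsTrace, G.isWalk_of_isPath (hp₂.append hq₂), G.isWalk_of_isPath (hp₃.append hq₃)])
    (fun z hz hzS => by
      simp only [List.mem_cons, List.mem_append, List.mem_ofFn] at hz
      rw [mem_cover_cons, mem_cover_cons]
      rcases hz with rfl | hz | ⟨i, rfl⟩ | rfl | hz
      · simp
      · simp [hz]
      · exact absurd hzS (hvS i)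
      · exact .inr (.inl hy)
      · simp [hz])
    (v ⟨0, hk⟩) (by simp)
  have hchain : (List.ofFn v).IsChain fun a b => a ≠ b ∧ a ∉ G.B b :=
    List.isChain_ofFn.2 fun i hi => ⟨hinj.ne (by simp), (hbwd i hi).2.2⟩
  rw [mem_cover_cons, mem_cover_cons] at hcov
  rcases hcov with h₀ | h₀ | h₀
  · exact hv₂ h₀
  · exact hv₃ (G.mem_of_isChain_not_mem_B (hp₃.append hq₃) hchain
      (fun _ => by rwa [List.head_ofFn]) _ (by simp))
  · simp [cover] at h₀
end

section
/- Let H be the subdivision graph of a control-flow graph G, obtained by subdividing every edge of G: the vertex set of H is V ⊔ E, and for each edge e = (u, v) of G, H has the edges (u, v_e) and (v_e, v), with entry s and terminal t. Then no vertex of H corresponding to an original vertex u ∈ V is ambiguous in H. -/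
theorem CFG.notMem_B_of_forall_succ_eq {V : Type*} {G : CFG V} {u x : V} (hxt : x ≠ G.t)
    (hsucc : ∀ y, G.E x y → y = u) : x ∉ G.B u := by
  rintro ⟨-, hreach⟩
  rcases hreach.cases_head with rfl | ⟨z, ⟨hxz, -, hzu⟩, -⟩
  · exact hxt rfl
  · exact hzu (hsucc z hxz)

section Subdivision

variable {V : Type*} {G : CFG V} {H : CFG (V ⊕ {p : V × V // G.E p.1 p.2})}

theorem exists_eq_inr_of_subdivision_edge_inl
    (hE : ∀ x y, H.E x y ↔ ∃ e : {p : V × V // G.E p.1 p.2},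
      (x = Sum.inl e.1.1 ∧ y = Sum.inr e) ∨ (x = Sum.inr e ∧ y = Sum.inl e.1.2))
    {x : V ⊕ {p : V × V // G.E p.1 p.2}} {u : V} (hx : H.E x (Sum.inl u)) :
    ∃ e : {p : V × V // G.E p.1 p.2}, x = Sum.inr e ∧ e.1.2 = u := by
  obtain ⟨e, ⟨-, h⟩ | ⟨rfl, h⟩⟩ := (hE x _).1 hx
  · exact absurd h Sum.inl_ne_inr
  · exact ⟨e, rfl, (Sum.inl.inj h).symm⟩

theorem eq_inl_of_subdivision_edge_inr
    (hE : ∀ x y, H.E x y ↔ ∃ e : {p : V × V // G.E p.1 p.2},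
      (x = Sum.inl e.1.1 ∧ y = Sum.inr e) ∨ (x = Sum.inr e ∧ y = Sum.inl e.1.2))
    {e : {p : V × V // G.E p.1 p.2}} {y : V ⊕ {p : V × V // G.E p.1 p.2}}
    (hy : H.E (Sum.inr e) y) : y = Sum.inl e.1.2 := by
  obtain ⟨e', ⟨h, -⟩ | ⟨h, rfl⟩⟩ := (hE _ y).1 hy
  · exact absurd h Sum.inr_ne_inl
  · rw [Sum.inr.inj h]

end Subdivision

theorem stmt_13_general {V : Type*} (G : CFG V)
    (H : CFG (V ⊕ {p : V × V // G.E p.1 p.2}))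
    (ht : H.t = Sum.inl G.t)
    (hE : ∀ x y, H.E x y ↔ ∃ e : {p : V × V // G.E p.1 p.2},
      (x = Sum.inl e.1.1 ∧ y = Sum.inr e) ∨ (x = Sum.inr e ∧ y = Sum.inl e.1.2))
    (u : V) :
    ¬ H.Ambiguous (Sum.inl u) := by
  rintro ⟨⟨x, hx, -, hxB⟩, -⟩
  obtain ⟨e, rfl, rfl⟩ := exists_eq_inr_of_subdivision_edge_inl hE hx
  refine CFG.notMem_B_of_forall_succ_eq ?_ (fun y hy => eq_inl_of_subdivision_edge_inr hE hy) hxB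
  rw [ht]
  exact Sum.inr_ne_inl

/-- Let `H` be the subdivision graph of `G` (vertex set `V ⊕ E`; each edge
`e = (u, v)` of `G` is replaced by the edges `(u, v_e)` and `(v_e, v)`; entry
`s`, terminal `t`). Then no vertex of `H` corresponding to an original vertex
`u ∈ V` is ambiguous in `H`. -/
theorem stmt_13 {V : Type*} [Finite V] (G : CFG V)
    (H : CFG (V ⊕ {p : V × V // G.E p.1 p.2}))
    (hs : H.s = Sum.inl G.s) (ht : H.t = Sum.inl G.t)
    (hE : ∀ x y, H.E x y ↔ ∃ e : {p : V × V // G.E p.1 p.2},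
      (x = Sum.inl e.1.1 ∧ y = Sum.inr e) ∨ (x = Sum.inr e ∧ y = Sum.inl e.1.2))
    (u : V) :
    ¬ H.Ambiguous (Sum.inl u) :=
  stmt_13_general G H ht hE u
end

section
/- Let H be the subdivision graph of a control-flow graph G (vertex set V ⊔ E; for each edge e = (u, v) of G, H has the edges (u, v_e) and (v_e, v); entry s, terminal t). Then for every valid instrumentation set S of H there exists a valid instrumentation set S' of H with |S'| ≤ |S| and S' consisting only of subdivision vertices, i.e., S' ⊆ {v_e : e ∈ E}. In particular, some minimum-size valid instrumentation set of H is contained in {v_e : e ∈ E}. -/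
namespace CFG

variable {V : Type*} {G : CFG V}

variable (G) in
abbrev Edge : Type _ := {p : V × V // G.E p.1 p.2}

lemma mem_cover_cons {x : V} {w : List V} {T : List (List V)} :
    x ∈ cover (w :: T) ↔ x ∈ w ∨ x ∈ cover T := by
  simp [cover]

lemma IsTrace.cons {w : List V} {T : List (List V)} (hw : G.IsWalk w) (hT : G.IsTrace T) :
    G.IsTrace (w :: T) := by
  rintro w' hw'
  rcases List.mem_cons.mp hw' with rfl | hw'
  exacts [hw, hT w' hw']

lemma IsWalk.exists_pred {w : List V} (hw : G.IsWalk w) {x : V} (hx : x ∈ w) (hxs : x ≠ G.s) :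
    ∃ y ∈ w, G.E y x := by
  obtain ⟨i, hi, rfl⟩ := List.getElem_of_mem hx
  cases i with
  | zero =>
    exact absurd (by simpa [List.head?_eq_getElem?, List.getElem?_eq_getElem hi] using hw.1) hxs
  | succ j => exact ⟨w[j], List.getElem_mem _, hw.2.2.getElem j hi⟩

lemma IsWalk.exists_succ {w : List V} (hw : G.IsWalk w) {x : V} (hx : x ∈ w) (hxt : x ≠ G.t) :
    ∃ y ∈ w, G.E x y := by
  obtain ⟨i, hi, rfl⟩ := List.getElem_of_mem hx
  by_cases hnext : i + 1 < w.length
  · exact ⟨w[i + 1], List.getElem_mem _, hw.2.2.getElem i hnext⟩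
  · obtain rfl : i = w.length - 1 := by omega
    have hlast : w[w.length - 1] = G.t := by
      simpa [List.getLast?_eq_getElem?, List.getElem?_eq_getElem hi] using hw.2.1
    exact absurd hlast hxt

lemma validInstr_iff {S : Set V} :
    G.ValidInstr S ↔ ∀ w T, G.IsWalk w → G.IsTrace T →
      (∃ x ∈ w, x ∉ cover T) → ∃ y ∈ S, y ∈ w ∧ y ∉ cover T := by
  constructor
  · rintro hS w T hw hT ⟨x, hxw, hxT⟩
    by_contra! hmiss
    have hcover : cover (w :: T) = cover T :=
      hS _ ⟨_, hT.cons hw, rfl⟩ _ ⟨_, hT, rfl⟩ <| by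
        ext y
        simp only [Set.mem_inter_iff, mem_cover_cons]
        grind
    exact hxT (hcover ▸ mem_cover_cons.2 (Or.inl hxw))
  · rintro hhit _ ⟨T, hT, rfl⟩ _ ⟨T', hT', rfl⟩ hST
    have key : ∀ {T T'}, G.IsTrace T → G.IsTrace T' → cover T ∩ S = cover T' ∩ S →
        cover T ⊆ cover T' := by
      rintro T T' hT hT' hST x ⟨w, hwT, hxw⟩
      by_contra hxT'
      obtain ⟨y, hyS, hyw, hyT'⟩ := hhit w T' (hT w hwT) hT' ⟨x, hxw, hxT'⟩
      exact hyT' (hST.subset ⟨⟨w, hwT, hyw⟩, hyS⟩).1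
    exact (key hT hT' hST).antisymm (key hT' hT hST.symm)

lemma validInstr_univ : G.ValidInstr Set.univ := fun _ _ _ _ h => by simpa using h

variable (G) in
lemma exists_validInstr_forall_ncard_le :
    ∃ S, G.ValidInstr S ∧ ∀ S', G.ValidInstr S' → S.ncard ≤ S'.ncard :=
  ⟨Function.argminOn Set.ncard {S | G.ValidInstr S} ⟨_, validInstr_univ⟩,
    Function.argminOn_mem Set.ncard {S | G.ValidInstr S} _, fun _ h => Function.argminOn_le _ _ h⟩

lemma ValidInstr.exchange {S : Set V} (hS : G.ValidInstr S) {u : V} (P : V → Prop)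
    (hdom : ∀ w, G.IsWalk w → u ∈ w →
      ∃ v ∈ w, P v ∧ ∀ T, G.IsTrace T → v ∈ cover T → u ∈ cover T) :
    G.ValidInstr (S \ {u}) ∨ ∃ v, P v ∧ G.ValidInstr (insert v (S \ {u})) := by
  by_cases h : G.ValidInstr (S \ {u})
  · exact Or.inl h
  right
  rw [validInstr_iff] at h
  push Not at h
  obtain ⟨w₀, T₀, hw₀, hT₀, hsep₀, hmiss₀⟩ := h
  have ⟨huw₀, huT₀⟩ : u ∈ w₀ ∧ u ∉ cover T₀ := by
    obtain ⟨y, hyS, hyw₀, hyT₀⟩ := validInstr_iff.1 hS w₀ T₀ hw₀ hT₀ hsep₀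
    obtain rfl : y = u := by_contra fun hyu => hyT₀ (hmiss₀ y ⟨hyS, hyu⟩ hyw₀)
    exact ⟨hyw₀, hyT₀⟩
  obtain ⟨v, hvw₀, hPv, hvu⟩ := hdom w₀ hw₀ huw₀
  have hvT₀ : v ∉ cover T₀ := fun h => huT₀ (hvu T₀ hT₀ h)
  refine ⟨v, hPv, validInstr_iff.2 fun w T hw hT hsep => ?_⟩
  by_contra! hmiss
  have ⟨huw, huT⟩ : u ∈ w ∧ u ∉ cover T := by
    obtain ⟨z, hzS, hzw, hzT⟩ := validInstr_iff.1 hS w T hw hT hsep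
    obtain rfl : z = u := by_contra fun hzu => hzT (hmiss z (Or.inr ⟨hzS, hzu⟩) hzw)
    exact ⟨hzw, hzT⟩
  have hvw : v ∉ w := fun h => huT (hvu T hT (hmiss v (Set.mem_insert _ _) h))
  -- `v` separates `w₀` from `w :: T₀`; in `S` only `u` could witness this, but `u ∈ w`.
  obtain ⟨z, hzS, hzw₀, hzT⟩ := validInstr_iff.1 hS w₀ (w :: T₀) hw₀ (hT₀.cons hw)
    ⟨v, hvw₀, by simp [mem_cover_cons, hvw, hvT₀]⟩
  rw [mem_cover_cons, not_or] at hzT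
  exact hzT.2 (hmiss₀ z ⟨hzS, fun h => hzT.1 (h ▸ huw)⟩ hzw₀)

end CFG

section Subdivision

open Set

variable {V : Type*} {G : CFG V} {H : CFG (V ⊕ G.Edge)}
  (hs : H.s = Sum.inl G.s) (ht : H.t = Sum.inl G.t)
  (hE : ∀ x y, H.E x y ↔ ∃ e : G.Edge,
    (x = Sum.inl e.1.1 ∧ y = Sum.inr e) ∨ (x = Sum.inr e ∧ y = Sum.inl e.1.2))

include hE

lemma subdivision_eq_inl_of_E_inr {y : V ⊕ G.Edge} {e : G.Edge} (h : H.E y (Sum.inr e)) :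
    y = Sum.inl e.1.1 := by
  simp only [hE, Sum.inr.injEq, reduceCtorEq, and_false, or_false] at h
  obtain ⟨_, rfl, rfl⟩ := h
  rfl

lemma subdivision_eq_inl_of_inr_E {y : V ⊕ G.Edge} {e : G.Edge} (h : H.E (Sum.inr e) y) :
    y = Sum.inl e.1.2 := by
  simp only [hE, Sum.inr.injEq, reduceCtorEq, false_and, false_or] at h
  obtain ⟨_, rfl, rfl⟩ := h
  rfl

lemma subdivision_exists_eq_inr_of_inl_E {u : V} {y : V ⊕ G.Edge} (h : H.E (Sum.inl u) y) :
    ∃ e : G.Edge, e.1.1 = u ∧ y = Sum.inr e := by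
  simp only [hE, Sum.inl.injEq, reduceCtorEq, false_and, or_false] at h
  obtain ⟨e, rfl, rfl⟩ := h
  exact ⟨e, rfl, rfl⟩

lemma subdivision_exists_eq_inr_of_E_inl {u : V} {y : V ⊕ G.Edge} (h : H.E y (Sum.inl u)) :
    ∃ e : G.Edge, e.1.2 = u ∧ y = Sum.inr e := by
  simp only [hE, Sum.inl.injEq, reduceCtorEq, and_false, false_or] at h
  obtain ⟨e, rfl, rfl⟩ := h
  exact ⟨e, rfl, rfl⟩

include hs ht

lemma subdivision_inl_mem_cover_of_inr_mem_cover {T : List (List (V ⊕ G.Edge))} (hT : H.IsTrace T)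
    {e : G.Edge} (he : Sum.inr e ∈ cover T) :
    Sum.inl e.1.1 ∈ cover T ∧ Sum.inl e.1.2 ∈ cover T := by
  obtain ⟨w, hwT, hew⟩ := he
  obtain ⟨x, hxw, hx⟩ := (hT w hwT).exists_pred hew (by simp [hs])
  obtain ⟨y, hyw, hy⟩ := (hT w hwT).exists_succ hew (by simp [ht])
  exact ⟨⟨w, hwT, subdivision_eq_inl_of_E_inr hE hx ▸ hxw⟩,
    ⟨w, hwT, subdivision_eq_inl_of_inr_E hE hy ▸ hyw⟩⟩

lemma subdivision_exists_inr_dominating {w : List (V ⊕ G.Edge)} (hw : H.IsWalk w) {u : V}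
    (hu : Sum.inl u ∈ w) :
    ∃ v ∈ w, v ∈ range Sum.inr ∧
      ∀ T, H.IsTrace T → v ∈ cover T → (Sum.inl u : V ⊕ G.Edge) ∈ cover T := by
  by_cases hut : Sum.inl u = H.t
  · obtain ⟨y, hyw, hy⟩ := hw.exists_pred hu fun hus => H.s_ne_t (hus ▸ hut)
    obtain ⟨e, rfl, rfl⟩ := subdivision_exists_eq_inr_of_E_inl hE hy
    exact ⟨_, hyw, ⟨e, rfl⟩, fun T hT he =>
      (subdivision_inl_mem_cover_of_inr_mem_cover hs ht hE hT he).2⟩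
  · obtain ⟨y, hyw, hy⟩ := hw.exists_succ hu hut
    obtain ⟨e, rfl, rfl⟩ := subdivision_exists_eq_inr_of_inl_E hE hy
    exact ⟨_, hyw, ⟨e, rfl⟩, fun T hT he =>
      (subdivision_inl_mem_cover_of_inr_mem_cover hs ht hE hT he).1⟩

variable [Finite V]

lemma subdivision_exists_validInstr_of_inl_mem {S : Set (V ⊕ G.Edge)} (hS : H.ValidInstr S)
    {u : V} (hu : Sum.inl u ∈ S) :
    ∃ S₂, H.ValidInstr S₂ ∧ S₂.ncard ≤ S.ncard ∧
      (S₂ ∩ range Sum.inl).ncard < (S ∩ range Sum.inl).ncard := by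
  have hlt : ((S \ {Sum.inl u}) ∩ range Sum.inl).ncard < (S ∩ range Sum.inl).ncard :=
    ncard_lt_ncard ⟨inter_subset_inter_left _ sdiff_subset,
      fun h => (h ⟨hu, u, rfl⟩).1.2 rfl⟩
  rcases hS.exchange (· ∈ range Sum.inr)
      (fun w hw huw => subdivision_exists_inr_dominating hs ht hE hw huw) with
    h | ⟨_, ⟨e, rfl⟩, h⟩
  · exact ⟨_, h, ncard_le_ncard sdiff_subset, hlt⟩
  · refine ⟨_, h, ?_, by rwa [insert_inter_of_notMem (by simp)]⟩
    calc (insert (Sum.inr e) (S \ {Sum.inl u})).ncard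
        ≤ (S \ {Sum.inl u}).ncard + 1 := ncard_insert_le _ _
      _ = S.ncard := ncard_sdiff_singleton_add_one hu

lemma subdivision_exists_validInstr_subset_range_inr {S : Set (V ⊕ G.Edge)}
    (hS : H.ValidInstr S) :
    ∃ S', H.ValidInstr S' ∧ S'.ncard ≤ S.ncard ∧ S' ⊆ range Sum.inr := by
  induction hn : (S ∩ range Sum.inl).ncard using Nat.strong_induction_on generalizing S with
  | _ n ih =>
  by_cases hsub : S ⊆ range Sum.inr
  · exact ⟨S, hS, le_rfl, hsub⟩
  obtain ⟨u, hu⟩ : ∃ u, Sum.inl u ∈ S := by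
    obtain ⟨x | e, hxS, hx⟩ := not_subset.1 hsub
    exacts [⟨x, hxS⟩, absurd ⟨e, rfl⟩ hx]
  obtain ⟨S₂, hS₂, hcard, hlt⟩ := subdivision_exists_validInstr_of_inl_mem hs ht hE hS hu
  obtain ⟨S', hS', hcard', hsub'⟩ := ih _ (hn ▸ hlt) hS₂ rfl
  exact ⟨S', hS', hcard'.trans hcard, hsub'⟩

end Subdivision

/-- Let `H` be the subdivision graph of `G`. Then for every valid
instrumentation set `S` of `H` there is a valid instrumentation set `S'` of
`H` with `|S'| ≤ |S|` consisting only of subdivision vertices. In particular,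
some minimum-size valid instrumentation set of `H` consists only of
subdivision vertices. -/
theorem stmt_14 {V : Type*} [Finite V] (G : CFG V)
    (H : CFG (V ⊕ {p : V × V // G.E p.1 p.2}))
    (hs : H.s = Sum.inl G.s) (ht : H.t = Sum.inl G.t)
    (hE : ∀ x y, H.E x y ↔ ∃ e : {p : V × V // G.E p.1 p.2},
      (x = Sum.inl e.1.1 ∧ y = Sum.inr e) ∨ (x = Sum.inr e ∧ y = Sum.inl e.1.2)) :
    (∀ S : Set (V ⊕ {p : V × V // G.E p.1 p.2}), H.ValidInstr S →
      ∃ S', H.ValidInstr S' ∧ S'.ncard ≤ S.ncard ∧ S' ⊆ Set.range Sum.inr) ∧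
    (∃ S', H.ValidInstr S' ∧ S' ⊆ Set.range Sum.inr ∧
      ∀ S, H.ValidInstr S → S'.ncard ≤ S.ncard) := by
  refine ⟨fun S hS => subdivision_exists_validInstr_subset_range_inr hs ht hE hS, ?_⟩
  obtain ⟨S₀, hS₀, hmin⟩ := H.exists_validInstr_forall_ncard_le
  obtain ⟨S', hS', hcard, hsub⟩ := subdivision_exists_validInstr_subset_range_inr hs ht hE hS₀
  exact ⟨S', hS', hsub, fun S hS => hcard.trans (hmin S hS)⟩
end

section
/- Let u be an ambiguous vertex of a control-flow graph G, let X = N^in(u) ∩ A(u) ∩ B(u) and Y = N^out(u) ∩ A(u) ∩ B(u). Then every valid edge-instrumentation set S for vertex coverage contains all edges {(x, u) : x ∈ X} or contains all edges {(u, y) : y ∈ Y}. -/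
/-! If neither `(x, u)` nor `(u, y)` lies in `S`, take two `u`-avoiding `s`–`t` walks, one
through `x` and one through `y`, and add the detour that follows the first up to `x`, steps
`x → u → y` and follows the second from `y` on. Every edge of `S` on the detour already lies on
one of the two walks, so the edge profiles agree on `S`, yet only the enlarged trace covers `u`. -/

namespace List

variable {α : Type*}

theorem isChain_iff_forall_mem_zip_tail {R : α → α → Prop} {l : List α} :
    IsChain R l ↔ ∀ p ∈ l.zip l.tail, R p.1 p.2 := by
  induction l using twoStepInduction <;> simp_all

theorem mem_zip_tail_iff_not_isChain {l : List α} {p : α × α} :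
    p ∈ l.zip l.tail ↔ ¬ IsChain (fun a b => (a, b) ≠ p) l := by
  rw [isChain_iff_forall_mem_zip_tail]
  push Not
  exact ⟨fun hp => ⟨p, hp, rfl⟩, fun ⟨q, hq, hqp⟩ => hqp ▸ hq⟩

theorem mem_zip_tail_append_cons {l m : List α} {a : α} {p : α × α} :
    p ∈ (l ++ a :: m).zip (l ++ a :: m).tail ↔
      p ∈ (l ++ [a]).zip (l ++ [a]).tail ∨ p ∈ (a :: m).zip m := by
  rw [mem_zip_tail_iff_not_isChain, mem_zip_tail_iff_not_isChain, isChain_split, not_and_or,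
    ← mem_zip_tail_iff_not_isChain (l := a :: m)]
  rfl

theorem exists_isChain_cons_of_reflTransGen_avoiding {r : α → α → Prop} {u a b : α}
    (h : Relation.ReflTransGen (fun x y => r x y ∧ x ≠ u ∧ y ≠ u) a b) (ha : a ≠ u) :
    ∃ l, IsChain r (a :: l) ∧ (a :: l).getLast? = some b ∧ u ∉ a :: l := by
  obtain ⟨l, hl, hlast⟩ := exists_isChain_cons_of_relationReflTransGen h
  have hne : ∀ v ∈ l, v ≠ u := hl.cons_induction _ _ (fun _ _ hxy _ => hxy.2.2) ha
  refine ⟨l, hl.imp fun _ _ hxy => hxy.1, by simp [getLast?_eq_some_getLast, hlast], ?_⟩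
  rintro (_ | ⟨_, hu⟩)
  exacts [ha rfl, hne u hu rfl]

end List

theorem edgeCover_cons_inter_eq {V : Type*} {w : List V} {T : List (List V)} {S : Set (V × V)}
    (h : ∀ p ∈ w.zip w.tail, p ∈ S → p ∈ edgeCover T) :
    edgeCover (w :: T) ∩ S = edgeCover T ∩ S := by
  ext p
  simp only [edgeCover, Set.mem_inter_iff, List.mem_cons, exists_eq_or_imp]
  exact ⟨fun ⟨hp, hpS⟩ => ⟨hp.elim (h p · hpS) id, hpS⟩, fun ⟨hp, hpS⟩ => ⟨.inr hp, hpS⟩⟩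

namespace CFG

variable {V : Type*} (G : CFG V)

theorem exists_walk_to_of_mem_A {u v : V} (hv : v ∈ G.A u) :
    ∃ l, (l ++ [v]).head? = some G.s ∧ (l ++ [v]).IsChain G.E ∧ u ∉ l ++ [v] := by
  have hrev : Relation.ReflTransGen (fun x y => flip G.E x y ∧ x ≠ u ∧ y ≠ u) v G.s :=
    Relation.ReflTransGen.mono (fun _ _ ⟨hxy, hy, hx⟩ => ⟨hxy, hx, hy⟩) _ _
      (Relation.reflTransGen_swap.2 hv.2)
  obtain ⟨l, hl, hlast, hu⟩ := List.exists_isChain_cons_of_reflTransGen_avoiding hrev hv.1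
  refine ⟨l.reverse, ?_, ?_, ?_⟩
  · rwa [← List.reverse_cons, List.head?_reverse]
  · rw [← List.reverse_cons, List.isChain_reverse]
    exact hl
  · rwa [← List.reverse_cons, List.mem_reverse]

theorem exists_walk_from_of_mem_B {u v : V} (hv : v ∈ G.B u) :
    ∃ l, (v :: l).getLast? = some G.t ∧ (v :: l).IsChain G.E ∧ u ∉ v :: l := by
  obtain ⟨l, hl, hlast, hu⟩ := List.exists_isChain_cons_of_reflTransGen_avoiding hv.2 hv.1
  exact ⟨l, hlast, hl, hu⟩

theorem isWalk_append_cons {l m : List V} {a : V} (hs : (l ++ [a]).head? = some G.s)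
    (hl : (l ++ [a]).IsChain G.E) (ht : (a :: m).getLast? = some G.t)
    (hm : (a :: m).IsChain G.E) : G.IsWalk (l ++ a :: m) := by
  refine ⟨?_, ?_, List.isChain_split.2 ⟨hl, hm⟩⟩
  · cases l <;> simp_all
  · rwa [List.getLast?_append_of_ne_nil _ (List.cons_ne_nil a m)]

theorem mem_or_mem_of_validEdgeInstr {S : Set (V × V)} (hS : G.ValidEdgeInstr S) {u x y : V}
    (hx : x ∈ G.A u ∩ G.B u) (hy : y ∈ G.A u ∩ G.B u) (hxu : G.E x u) (huy : G.E u y) :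
    (x, u) ∈ S ∨ (u, y) ∈ S := by
  by_contra! hxyS
  obtain ⟨P₁, hsP₁, hP₁, huP₁⟩ := G.exists_walk_to_of_mem_A hx.1
  obtain ⟨Q₁, htQ₁, hQ₁, huQ₁⟩ := G.exists_walk_from_of_mem_B hx.2
  obtain ⟨P₂, hsP₂, hP₂, huP₂⟩ := G.exists_walk_to_of_mem_A hy.1
  obtain ⟨Q₂, htQ₂, hQ₂, huQ₂⟩ := G.exists_walk_from_of_mem_B hy.2
  set T := [P₁ ++ x :: Q₁, P₂ ++ y :: Q₂]
  set W := P₁ ++ x :: u :: y :: Q₂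
  have hT : G.IsTrace T := by
    simp only [T, IsTrace, List.mem_cons, List.not_mem_nil, or_false, forall_eq_or_imp, forall_eq]
    exact ⟨G.isWalk_append_cons hsP₁ hP₁ htQ₁ hQ₁, G.isWalk_append_cons hsP₂ hP₂ htQ₂ hQ₂⟩
  have hWT : G.IsTrace (W :: T) := by
    refine List.forall_mem_cons.2 ⟨G.isWalk_append_cons hsP₁ hP₁ ?_ ?_, hT⟩
    · simpa using htQ₂
    · simpa [hxu, huy] using hQ₂
  have hedges : edgeCover (W :: T) ∩ S = edgeCover T ∩ S := by
    refine edgeCover_cons_inter_eq fun p hp hpS => ?_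
    rcases List.mem_zip_tail_append_cons.1 hp with hp | hp
    · exact ⟨_, List.mem_cons_self, List.mem_zip_tail_append_cons.2 (.inl hp)⟩
    · simp only [List.zip_cons_cons, List.mem_cons] at hp
      rcases hp with rfl | rfl | hp
      exacts [(hxyS.1 hpS).elim, (hxyS.2 hpS).elim,
        ⟨P₂ ++ y :: Q₂, by simp [T], List.mem_zip_tail_append_cons.2 (.inr hp)⟩]
  have hu_mem : u ∈ cover (W :: T) := ⟨W, List.mem_cons_self, by simp [W]⟩
  have hu_not_mem : u ∉ cover T := by
    simp only [cover, T, Set.mem_ofPred_eq, List.mem_cons, List.mem_append, List.not_mem_nil,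
      or_false, exists_eq_or_imp, exists_eq_left] at huP₁ huQ₁ huP₂ huQ₂ ⊢
    tauto
  exact hu_not_mem (hS _ _ hWT hT hedges ▸ hu_mem)

end CFG

theorem stmt_15_general {V : Type*} (G : CFG V) (u : V) (S : Set (V × V))
    (hS : G.ValidEdgeInstr S) :
    (∀ x ∈ G.Nin u ∩ (G.A u ∩ G.B u), (x, u) ∈ S) ∨
    (∀ y ∈ G.Nout u ∩ (G.A u ∩ G.B u), (u, y) ∈ S) := by
  by_contra! h
  obtain ⟨⟨x, ⟨hxu, hx⟩, hxS⟩, ⟨y, ⟨huy, hy⟩, hyS⟩⟩ := h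
  exact (G.mem_or_mem_of_validEdgeInstr hS hx hy hxu huy).elim hxS hyS

/-- Let `u` be an ambiguous vertex, `X = Nin u ∩ A u ∩ B u` and
`Y = Nout u ∩ A u ∩ B u`. Then every valid edge-instrumentation set `S ⊆ E`
for vertex coverage contains all edges `(x, u)` for `x ∈ X`, or contains all
edges `(u, y)` for `y ∈ Y`. -/
theorem stmt_15 {V : Type*} [Finite V] (G : CFG V) (u : V)
    (hu : G.Ambiguous u) (S : Set (V × V)) (hSE : ∀ p ∈ S, G.E p.1 p.2)
    (hS : G.ValidEdgeInstr S) :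
    (∀ x ∈ G.Nin u ∩ (G.A u ∩ G.B u), (x, u) ∈ S) ∨
    (∀ y ∈ G.Nout u ∩ (G.A u ∩ G.B u), (u, y) ∈ S) :=
  stmt_15_general G u S hS
end
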